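/- For every λ-theory L satisfying β-equality and objects A, B, C of the category of retracts R, the object C^B := λx₁. C ∘ x₁ ∘ B is an exponential of C by B: there is a bijection ψ : R(A × B, C) ≅ R(A, C^B), natural in A, given by ψ(f) = λx₁x₂. f (x₁, x₂) and ψ⁻¹(g) = λx₁. g (π₁ x₁) (π₂ x₁). -/
import Mathlib


/-- An (untyped) λ-theory satisfying β-equality (Def. 2.1/2.4 of the paper):
an algebraic theory `T` with abstraction `abs` (written `λₙ` in the paper) and
application-transpose `rho` (written `ρₙ`), compatible with substitution, and
satisfying β-equality `ρₙ ∘ λₙ = id`. -/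
structure LamTh where
  T : ℕ → Type
  xv : ∀ n, Fin n → T n
  subst : ∀ {m n}, T m → (Fin m → T n) → T n
  subst_xv : ∀ {m n} (j : Fin m) (g : Fin m → T n), subst (xv m j) g = g j
  subst_id : ∀ {m} (f : T m), subst f (xv m) = f
  subst_assoc : ∀ {l m n} (f : T l) (g : Fin l → T m) (h : Fin m → T n),
      subst (subst f g) h = subst f fun i => subst (g i) h
  abs : ∀ {n}, T (n + 1) → T n
  rho : ∀ {n}, T n → T (n + 1)
  abs_subst : ∀ {m n} (f : T (m + 1)) (h : Fin m → T n),
      subst (abs f) h =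
        abs (subst f (Fin.snoc (fun i => subst (h i) fun j => xv (n + 1) j.castSucc)
          (xv (n + 1) (Fin.last n))))
  rho_subst : ∀ {m n} (g : T m) (h : Fin m → T n),
      rho (subst g h) =
        subst (rho g) (Fin.snoc (fun i => subst (h i) fun j => xv (n + 1) j.castSucc)
          (xv (n + 1) (Fin.last n)))
  beta : ∀ {n} (f : T (n + 1)), rho (abs f) = f

namespace LamTh

variable (L : LamTh)

/-- Weakening `ι_{n,1} : T n → T (n+1)`. -/
def wk {n : ℕ} (f : L.T n) : L.T (n + 1) :=
  L.subst f fun j => L.xv (n + 1) j.castSucc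

/-- Weakening of a constant `ι_{0,n} : T 0 → T n`. -/
def wk0 {n : ℕ} (a : L.T 0) : L.T n :=
  L.subst a Fin.elim0

/-- Application `f g := ρ(x_{1,1}) • (f, g)` (Def. 2.12/Rem. 2.13). -/
def appT {n : ℕ} (f g : L.T n) : L.T n :=
  L.subst (L.rho (L.xv 1 0)) ![f, g]

/-- Composition of terms, `a ∘ b := λ x. a (b x)`. -/
def compT {n : ℕ} (f g : L.T n) : L.T n :=
  L.abs (L.appT (L.wk f) (L.appT (L.wk g) (L.xv (n + 1) (Fin.last n))))

/-- `a ∘ b` for constants. -/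
def comp (a b : L.T 0) : L.T 0 := L.compT a b

/-- Pairing `(s, t) := λ x. x s t`. -/
def pairT {n : ℕ} (s t : L.T n) : L.T n :=
  L.abs (L.appT (L.appT (L.xv (n + 1) (Fin.last n)) (L.wk s)) (L.wk t))

/-- Pairing of morphisms, `⟨f, g⟩ := λ x. (f x, g x)`. -/
def pairMor (f g : L.T 0) : L.T 0 :=
  L.abs (L.pairT (L.appT (L.wk f) (L.xv 1 0)) (L.appT (L.wk g) (L.xv 1 0)))

/-- First projection `π₁ = λ x₁. x₁ (λ x₂ x₃. x₂)`. -/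
def pi1 : L.T 0 := L.abs (L.appT (L.xv 1 0) (L.abs (L.abs (L.xv 3 1))))

/-- Second projection `π₂ = λ x₁. x₁ (λ x₂ x₃. x₃)`. -/
def pi2 : L.T 0 := L.abs (L.appT (L.xv 1 0) (L.abs (L.abs (L.xv 3 2))))

/-- The reflexive object `U = λ x₁. x₁` of the category of retracts. -/
def UU : L.T 0 := L.abs (L.xv 1 0)

/-- The terminal object `I = λ x₁ x₂. x₂`. -/
def Iterm : L.T 0 := L.abs (L.abs (L.xv 2 1))

/-- `f` is a morphism `A → B` in the category of retracts `R`: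
`B ∘ f = f = f ∘ A`. -/
def IsRMor (A B f : L.T 0) : Prop := L.comp B f = f ∧ L.comp f A = f

/-- `A` is an object of the category of retracts `R`: `A ∘ A = A`. -/
def IsRObj (A : L.T 0) : Prop := L.comp A A = A

/-- `π_{n,i} = π₂ ∘ π₁^{n-i}` (with `i` 0-indexed here, so `π₂ ∘ π₁^{n-1-i}`). -/
def piProj (n : ℕ) (i : Fin n) : L.T 0 :=
  (fun t => L.comp t L.pi1)^[n - 1 - (i : ℕ)] L.pi2

/-- `⟨a₁, …, aₙ⟩ = ⟨⟨…⟨⟨λx.x, a₁⟩, a₂⟩…⟩, aₙ⟩`, the tupling of morphisms. -/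
def tupleMor : ∀ {n : ℕ}, (Fin n → L.T 0) → L.T 0
  | 0, _ => L.UU
  | n + 1, g => L.pairMor (tupleMor fun i => g i.castSucc) (g (Fin.last n))

/-- The `n`-fold product `Uⁿ = ⟨π_{n,i}⟩ᵢ` of `U` in `R`. -/
def Upow (n : ℕ) : L.T 0 := L.tupleMor fun i : Fin n => L.piProj n i

/-- The binary product object `A₁ × A₂ = ⟨A₁ ∘ π₁, A₂ ∘ π₂⟩` in `R`. -/
def prodObj (A₁ A₂ : L.T 0) : L.T 0 :=
  L.pairMor (L.comp A₁ L.pi1) (L.comp A₂ L.pi2)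

/-- The exponential object `C^B = λ x₁. C ∘ x₁ ∘ B` in `R`. -/
def expObj (B C : L.T 0) : L.T 0 :=
  L.abs (L.compT (L.compT (L.wk0 C) (L.xv 1 0)) (L.wk0 B))

end LamTh

namespace LamTh

variable (L : LamTh)

/-- The exponential transpose `ψ(f) = λ x₁ x₂. f (x₁, x₂)`. -/
def psiExp (f : L.T 0) : L.T 0 :=
  L.abs (L.abs (L.appT (L.wk0 f) (L.pairT (L.xv 2 0) (L.xv 2 1))))

/-- The inverse transpose `ψ⁻¹(g) = λ x₁. g (π₁ x₁) (π₂ x₁)`. -/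
def psiExpInv (g : L.T 0) : L.T 0 :=
  L.abs (L.appT (L.appT (L.wk0 g) (L.appT (L.wk0 L.pi1) (L.xv 1 0)))
    (L.appT (L.wk0 L.pi2) (L.xv 1 0)))

end LamTh

namespace LamTh

variable (L : LamTh)

theorem subst_closed (a : L.T 0) {n : ℕ} (h : Fin 0 → L.T n) :
    L.subst a h = L.wk0 a := by
  unfold wk0; congr 1; funext i; exact i.elim0

theorem wk_closed (a : L.T 0) : L.wk a = L.wk0 a := L.subst_closed a _

theorem subst_wk0 {n m : ℕ} (a : L.T 0) (h : Fin n → L.T m) :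
    L.subst (L.wk0 a) h = L.wk0 a := by
  rw [wk0, L.subst_assoc]; exact L.subst_closed a _

theorem wk_wk0 {n : ℕ} (a : L.T 0) : L.wk (L.wk0 a : L.T n) = L.wk0 a := L.subst_wk0 a _

theorem subst_appT {m n : ℕ} (f g : L.T m) (h : Fin m → L.T n) :
    L.subst (L.appT f g) h = L.appT (L.subst f h) (L.subst g h) := by
  rw [appT, appT, L.subst_assoc]
  congr 1; funext i
  fin_cases i <;> simp

theorem subst_wk_snoc {m n : ℕ} (f : L.T m) (g : Fin m → L.T n) (c : L.T n) :
    L.subst (L.wk f) (Fin.snoc g c) = L.subst f g := by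
  rw [wk, L.subst_assoc]
  congr 1; funext j; rw [L.subst_xv, Fin.snoc_castSucc]

theorem rho_eq {n : ℕ} (f : L.T n) :
    L.rho f = L.appT (L.wk f) (L.xv (n + 1) (Fin.last n)) := by
  have h1 : L.rho f = L.rho (L.subst (L.xv 1 0) (fun _ => f)) := by rw [L.subst_xv]
  rw [h1, L.rho_subst, appT]
  congr 1; funext i
  fin_cases i <;> simp [Fin.snoc, wk]

theorem beta_appT {n : ℕ} (t : L.T (n + 1)) (c : L.T n) :
    L.appT (L.abs t) c = L.subst t (Fin.snoc (L.xv n) c) := by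
  have h := congrArg (fun u => L.subst u (Fin.snoc (L.xv n) c)) (L.beta t)
  rw [rho_eq, subst_appT, subst_wk_snoc, L.subst_id, L.subst_xv, Fin.snoc_last] at h
  exact h

end LamTh
namespace LamTh

variable (L : LamTh)

theorem app_wk0_abs {n : ℕ} (W : L.T 1) (u : L.T n) :
    L.appT (L.wk0 (L.abs W)) u = L.subst W (fun _ => u) := by
  rw [wk0, L.abs_subst, beta_appT, L.subst_assoc]
  congr 1; funext i
  fin_cases i
  simp [Fin.snoc, L.subst_xv]

theorem app2_wk0_abs {n : ℕ} (W : L.T 2) (u v : L.T n) :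
    L.appT (L.appT (L.wk0 (L.abs (L.abs W))) u) v = L.subst W ![u, v] := by
  rw [app_wk0_abs, L.abs_subst, beta_appT, L.subst_assoc]
  congr 1; funext i
  fin_cases i
  · simp only [Fin.snoc, L.subst_xv]
    simp only [Fin.val_zero, Nat.zero_lt_one, dite_true]
    exact (L.subst_wk_snoc u (L.xv n) v).trans (L.subst_id u)
  · simp [Fin.snoc, L.subst_xv]

theorem subst_compT {m n : ℕ} (f g : L.T m) (h : Fin m → L.T n) :
    L.subst (L.compT f g) h = L.compT (L.subst f h) (L.subst g h) := by
  rw [compT, compT, L.abs_subst, subst_appT, subst_appT, L.subst_xv, Fin.snoc_last]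
  congr 2 <;>
  · rw [subst_wk_snoc, wk, L.subst_assoc]

theorem subst_pairT {m n : ℕ} (s t : L.T m) (h : Fin m → L.T n) :
    L.subst (L.pairT s t) h = L.pairT (L.subst s h) (L.subst t h) := by
  rw [pairT, pairT, L.abs_subst, subst_appT, subst_appT, L.subst_xv, Fin.snoc_last]
  congr 2 <;>
  · rw [subst_wk_snoc, wk, L.subst_assoc]

theorem wk_appT {n : ℕ} (f g : L.T n) :
    L.wk (L.appT f g) = L.appT (L.wk f) (L.wk g) := L.subst_appT f g _

theorem wk_compT {n : ℕ} (f g : L.T n) :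
    L.wk (L.compT f g) = L.compT (L.wk f) (L.wk g) := L.subst_compT f g _

theorem wk_pairT {n : ℕ} (s t : L.T n) :
    L.wk (L.pairT s t) = L.pairT (L.wk s) (L.wk t) := L.subst_pairT s t _

theorem wk0_comp {n : ℕ} (a b : L.T 0) :
    (L.wk0 (L.comp a b) : L.T n) = L.compT (L.wk0 a) (L.wk0 b) := by
  rw [comp, wk0, subst_compT]; rfl

theorem appT_compT {n : ℕ} (f g u : L.T n) :
    L.appT (L.compT f g) u = L.appT f (L.appT g u) := by
  rw [compT, beta_appT, subst_appT, subst_appT, L.subst_xv, Fin.snoc_last,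
      subst_wk_snoc, subst_wk_snoc, L.subst_id, L.subst_id]

theorem appT_pairT {n : ℕ} (s t u : L.T n) :
    L.appT (L.pairT s t) u = L.appT (L.appT u s) t := by
  rw [pairT, beta_appT, subst_appT, subst_appT, L.subst_xv, Fin.snoc_last,
      subst_wk_snoc, subst_wk_snoc, L.subst_id, L.subst_id]

theorem comp_eq (a b : L.T 0) :
    L.comp a b = L.abs (L.appT (L.wk0 a) (L.appT (L.wk0 b) (L.xv 1 0))) := by
  rw [comp, compT, wk_closed, wk_closed]
  rfl

theorem app_comp {n : ℕ} (a b : L.T 0) (u : L.T n) :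
    L.appT (L.wk0 (L.comp a b)) u = L.appT (L.wk0 a) (L.appT (L.wk0 b) u) := by
  rw [comp_eq, app_wk0_abs, subst_appT, subst_appT, L.subst_xv, subst_wk0, subst_wk0]

theorem app_pairMor {n : ℕ} (a b : L.T 0) (u : L.T n) :
    L.appT (L.wk0 (L.pairMor a b)) u
      = L.pairT (L.appT (L.wk0 a) u) (L.appT (L.wk0 b) u) := by
  rw [pairMor, app_wk0_abs, subst_pairT, subst_appT, subst_appT, L.subst_xv,
      wk_closed, wk_closed, subst_wk0, subst_wk0]

end LamTh
namespace LamTh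

variable (L : LamTh)

theorem subst_K1 {n : ℕ} (h : Fin 1 → L.T n) :
    L.subst (L.abs (L.abs (L.xv 3 1))) h
      = L.abs (L.abs (L.xv (n + 2) ((Fin.last n).castSucc))) := by
  rw [L.abs_subst, L.abs_subst, L.subst_xv,
      show (1 : Fin 3) = Fin.castSucc (Fin.last 1) by decide,
      Fin.snoc_castSucc, Fin.snoc_last, L.subst_xv]

theorem subst_K2 {n : ℕ} (h : Fin 1 → L.T n) :
    L.subst (L.abs (L.abs (L.xv 3 2))) h
      = L.abs (L.abs (L.xv (n + 2) (Fin.last (n + 1)))) := by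
  rw [L.abs_subst, L.abs_subst, L.subst_xv,
      show (2 : Fin 3) = Fin.last 2 by decide, Fin.snoc_last]

theorem app_pi1_pairT {n : ℕ} (s t : L.T n) :
    L.appT (L.wk0 L.pi1) (L.pairT s t) = s := by
  rw [pi1, app_wk0_abs, subst_appT, L.subst_xv, subst_K1, appT_pairT,
      beta_appT, L.abs_subst, L.subst_xv, Fin.snoc_castSucc, Fin.snoc_last]
  rw [beta_appT]
  exact (L.subst_wk_snoc s (L.xv n) t).trans (L.subst_id s)

theorem app_pi2_pairT {n : ℕ} (s t : L.T n) :
    L.appT (L.wk0 L.pi2) (L.pairT s t) = t := by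
  rw [pi2, app_wk0_abs, subst_appT, L.subst_xv, subst_K2, appT_pairT,
      beta_appT, L.abs_subst, L.subst_xv, Fin.snoc_last, beta_appT,
      L.subst_xv, Fin.snoc_last]

theorem app_prod {n : ℕ} (A B : L.T 0) (u : L.T n) :
    L.appT (L.wk0 (L.prodObj A B)) u
      = L.pairT (L.appT (L.wk0 A) (L.appT (L.wk0 L.pi1) u))
          (L.appT (L.wk0 B) (L.appT (L.wk0 L.pi2) u)) := by
  rw [prodObj, app_pairMor, app_comp, app_comp]

theorem app_exp {n : ℕ} (B C : L.T 0) (u : L.T n) :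
    L.appT (L.wk0 (L.expObj B C)) u = L.compT (L.compT (L.wk0 C) u) (L.wk0 B) := by
  rw [expObj, app_wk0_abs, subst_compT, subst_compT, L.subst_xv, subst_wk0, subst_wk0]

theorem app_psiExp {n : ℕ} (f : L.T 0) (u : L.T n) :
    L.appT (L.wk0 (L.psiExp f)) u
      = L.abs (L.appT (L.wk0 f) (L.pairT (L.wk u) (L.xv (n + 1) (Fin.last n)))) := by
  rw [psiExp, app_wk0_abs, L.abs_subst, subst_appT, subst_pairT, subst_wk0,
      L.subst_xv, L.subst_xv,
      show (0 : Fin 2) = Fin.castSucc (Fin.last 0) by decide, Fin.snoc_castSucc,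
      show (1 : Fin 2) = Fin.last 1 by decide, Fin.snoc_last]
  rfl

theorem app2_psiExp {n : ℕ} (f : L.T 0) (u v : L.T n) :
    L.appT (L.appT (L.wk0 (L.psiExp f)) u) v = L.appT (L.wk0 f) (L.pairT u v) := by
  rw [psiExp, app2_wk0_abs, subst_appT, subst_pairT, subst_wk0, L.subst_xv, L.subst_xv]
  simp

theorem app_psiExpInv {n : ℕ} (g : L.T 0) (u : L.T n) :
    L.appT (L.wk0 (L.psiExpInv g)) u
      = L.appT (L.appT (L.wk0 g) (L.appT (L.wk0 L.pi1) u))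
          (L.appT (L.wk0 L.pi2) u) := by
  rw [psiExpInv, app_wk0_abs, subst_appT, subst_appT, subst_appT, subst_appT,
      L.subst_xv, subst_wk0, subst_wk0, subst_wk0]

end LamTh
namespace LamTh

variable (L : LamTh)

theorem beta_subst {m n : ℕ} (W : L.T (m + 1)) (h : Fin m → L.T n) (v : L.T n) :
    L.appT (L.subst (L.abs W) h) v = L.subst W (Fin.snoc h v) := by
  rw [L.abs_subst, beta_appT, L.subst_assoc]
  congr 1; funext i
  refine Fin.lastCases ?_ ?_ i
  · rw [Fin.snoc_last, Fin.snoc_last, L.subst_xv, Fin.snoc_last]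
  · intro j
    rw [Fin.snoc_castSucc, Fin.snoc_castSucc]
    exact (L.subst_wk_snoc (h j) (L.xv n) v).trans (L.subst_id (h j))

theorem app_wk_abs {n : ℕ} (W : L.T (n + 1)) (v : L.T (n + 1)) :
    L.appT (L.wk (L.abs W)) v
      = L.subst W (Fin.snoc (fun j => L.xv (n + 1) j.castSucc) v) :=
  L.beta_subst W _ v

theorem wk_xv {n : ℕ} (i : Fin n) : L.wk (L.xv n i) = L.xv (n + 1) i.castSucc :=
  L.subst_xv i _

theorem eta_point {n : ℕ} (s : L.T (n + 1)) :
    L.appT (L.wk (L.abs s)) (L.xv (n + 1) (Fin.last n)) = s := by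
  rw [app_wk_abs]
  have e : (Fin.snoc (fun j : Fin n => L.xv (n + 1) j.castSucc)
      (L.xv (n + 1) (Fin.last n))) = L.xv (n + 1) := by
    funext i
    refine Fin.lastCases ?_ ?_ i
    · rw [Fin.snoc_last]
    · intro j; rw [Fin.snoc_castSucc]
  rw [e, L.subst_id]

theorem abs_ext {n : ℕ} {s t : L.T (n + 1)}
    (h : L.appT (L.wk (L.abs s)) (L.xv (n + 1) (Fin.last n))
       = L.appT (L.wk (L.abs t)) (L.xv (n + 1) (Fin.last n))) :
    L.abs s = L.abs t := by
  rw [eta_point, eta_point] at h; rw [h]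

theorem compT_assoc {n : ℕ} (a b c : L.T n) :
    L.compT (L.compT a b) c = L.compT a (L.compT b c) := by
  show L.abs (L.appT (L.wk (L.compT a b)) (L.appT (L.wk c) (L.xv (n + 1) (Fin.last n))))
     = L.abs (L.appT (L.wk a) (L.appT (L.wk (L.compT b c)) (L.xv (n + 1) (Fin.last n))))
  rw [wk_compT, wk_compT, appT_compT, appT_compT]

theorem compT_eq_abs {n : ℕ} (a b : L.T n) :
    L.compT a b = L.abs (L.appT (L.wk a) (L.appT (L.wk b) (L.xv (n + 1) (Fin.last n)))) := rfl

theorem snoc20 {α : Type} (g : Fin 1 → α) (c : α) : (Fin.snoc g c : Fin 2 → α) 0 = g 0 := rfl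

theorem snoc21 {α : Type} (g : Fin 1 → α) (c : α) : (Fin.snoc g c : Fin 2 → α) 1 = c := rfl

end LamTh
/-- For every λ-theory `L` satisfying β-equality and objects
`A, B, C` of the category of retracts `R`, the object `C^B := λ x₁. C ∘ x₁ ∘ B`
is an exponential of `C` by `B`: there is a bijection
`ψ : R(A × B, C) ≅ R(A, C^B)`, natural in `A`, given by `ψ(f) = λ x₁ x₂. f (x₁, x₂)`
and `ψ⁻¹(g) = λ x₁. g (π₁ x₁) (π₂ x₁)`. -/
theorem R_has_exponentials (L : LamTh) (A B C : L.T 0)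
    (hA : L.IsRObj A) (hB : L.IsRObj B) (hC : L.IsRObj C) :
    -- `C^B` is an object of `R`
    L.IsRObj (L.expObj B C) ∧
    -- the bijection, given by `ψ` and `ψ⁻¹`
    (∃ e : {f : L.T 0 // L.IsRMor (L.prodObj A B) C f} ≃
        {g : L.T 0 // L.IsRMor A (L.expObj B C) g},
      (∀ f, (e f).1 = L.psiExp f.1) ∧ (∀ g, (e.symm g).1 = L.psiExpInv g.1)) ∧
    -- naturality of `ψ` in `A`: for a morphism `h : A' → A`,
    -- `ψ(f ∘ (h × id_B)) = ψ(f) ∘ h`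
    ∀ A' h f : L.T 0, L.IsRObj A' → L.IsRMor A' A h →
      L.IsRMor (L.prodObj A B) C f →
      L.psiExp (L.comp f (L.pairMor (L.comp h (L.comp A' L.pi1)) (L.comp B (L.comp B L.pi2)))) =
        L.comp (L.psiExp f) h := by
  have hA' : L.comp A A = A := hA
  have hB' : L.comp B B = B := hB
  have hC' : L.comp C C = C := hC
  have ptw : ∀ (a b c : L.T 0), L.comp a b = c → ∀ (n : ℕ) (u : L.T n),
      L.appT (L.wk0 a) (L.appT (L.wk0 b) u) = L.appT (L.wk0 c) u := by
    intro a b c hab n u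
    rw [← L.app_comp, hab]
  have hAA := ptw A A A hA'
  have hBB := ptw B B B hB'
  have hCC := ptw C C C hC'
  have hPapp : ∀ (n : ℕ) (u v : L.T n),
      L.appT (L.wk0 (L.prodObj A B)) (L.pairT u v)
        = L.pairT (L.appT (L.wk0 A) u) (L.appT (L.wk0 B) v) := by
    intro n u v
    rw [L.app_prod, L.app_pi1_pairT, L.app_pi2_pairT]
  have cBB : ∀ (n : ℕ), L.compT (L.wk0 B) (L.wk0 B) = (L.wk0 B : L.T n) := by
    intro n; rw [← L.wk0_comp, hB']
  have cCC : ∀ (n : ℕ) (w : L.T n),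
      L.compT (L.wk0 C) (L.compT (L.wk0 C) w) = L.compT (L.wk0 C) w := by
    intro n w; rw [← L.compT_assoc, ← L.wk0_comp, hC']
  have goal1 : L.IsRObj (L.expObj B C) := by
    show L.comp (L.expObj B C) (L.expObj B C) = L.expObj B C
    rw [L.comp_eq, L.app_exp, L.app_exp]
    show _ = L.abs (L.compT (L.compT (L.wk0 C) (L.xv 1 0)) (L.wk0 B))
    congr 1
    simp only [L.compT_assoc, cCC, cBB]
  have mor_psi : ∀ f : L.T 0, L.IsRMor (L.prodObj A B) C f →
      L.IsRMor A (L.expObj B C) (L.psiExp f) := by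
    intro f hf
    obtain ⟨hf1, hf2⟩ := hf
    have hfC := ptw C f f hf1
    have hfP := ptw f (L.prodObj A B) f hf2
    have fpair : ∀ (n : ℕ) (u v : L.T n),
        L.appT (L.wk0 f) (L.pairT u v)
          = L.appT (L.wk0 f) (L.pairT (L.appT (L.wk0 A) u) (L.appT (L.wk0 B) v)) := by
      intro n u v
      conv_lhs => rw [← hfP n (L.pairT u v)]
      rw [hPapp n]
    constructor
    · rw [L.comp_eq, L.app_psiExp, L.app_exp]
      conv_rhs => rw [LamTh.psiExp]
      congr 1
      rw [L.compT_eq_abs]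
      congr 1
      rw [L.wk_compT, L.wk_wk0, L.wk_wk0, L.appT_compT, L.app_wk_abs]
      simp only [L.subst_appT, L.subst_pairT, L.subst_wk0, L.subst_xv, L.wk_xv,
        Fin.snoc_castSucc, Fin.snoc_last, Fin.castSucc_zero,
        show Fin.last 1 = (1 : Fin 2) from rfl, LamTh.snoc20, LamTh.snoc21]
      rw [hfC]
      conv_lhs => rw [fpair 2]
      conv_rhs => rw [fpair 2]
      rw [hBB]
    · rw [L.comp_eq, L.app_psiExp]
      conv_rhs => rw [LamTh.psiExp]
      congr 2
      rw [L.wk_appT, L.wk_wk0, L.wk_xv]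
      simp only [Fin.castSucc_zero, show Fin.last 1 = (1 : Fin 2) from rfl]
      conv_lhs => rw [fpair 2, hAA]
      conv_rhs => rw [fpair 2]
  have mor_psiInv : ∀ g : L.T 0, L.IsRMor A (L.expObj B C) g →
      L.IsRMor (L.prodObj A B) C (L.psiExpInv g) := by
    intro g hg
    obtain ⟨hg1, hg2⟩ := hg
    have hgE := ptw (L.expObj B C) g g hg1
    have hgA := ptw g A g hg2
    have gCB : ∀ (n : ℕ) (u v : L.T n),
        L.appT (L.appT (L.wk0 g) u) v
          = L.appT (L.wk0 C) (L.appT (L.appT (L.wk0 g) u) (L.appT (L.wk0 B) v)) := by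
      intro n u v
      conv_lhs => rw [← hgE n u, L.app_exp, L.appT_compT, L.appT_compT]
    constructor
    · rw [L.comp_eq, L.app_psiExpInv]
      conv_rhs => rw [LamTh.psiExpInv]
      congr 1
      conv_lhs => rw [gCB 1]
      rw [hCC, ← gCB 1]
    · rw [L.comp_eq, L.app_psiExpInv, L.app_prod, L.app_pi1_pairT, L.app_pi2_pairT]
      conv_rhs => rw [LamTh.psiExpInv]
      congr 1
      rw [hgA]
      conv_lhs => rw [gCB 1, hBB]
      rw [← gCB 1]
  have linv : ∀ f : L.T 0, L.IsRMor (L.prodObj A B) C f →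
      L.psiExpInv (L.psiExp f) = f := by
    intro f hf
    obtain ⟨hf1, hf2⟩ := hf
    have hfP := ptw f (L.prodObj A B) f hf2
    conv_lhs => rw [LamTh.psiExpInv, L.app2_psiExp]
    conv_rhs => rw [← hf2, L.comp_eq, L.app_prod]
    congr 1
    conv_lhs => rw [← hfP 1 (L.pairT (L.appT (L.wk0 L.pi1) (L.xv 1 0))
      (L.appT (L.wk0 L.pi2) (L.xv 1 0))), hPapp 1]
  have rinv : ∀ g : L.T 0, L.IsRMor A (L.expObj B C) g →
      L.psiExp (L.psiExpInv g) = g := by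
    intro g hg
    obtain ⟨hg1, hg2⟩ := hg
    have hgE := ptw (L.expObj B C) g g hg1
    have gCB : ∀ (n : ℕ) (u v : L.T n),
        L.appT (L.appT (L.wk0 g) u) v
          = L.appT (L.wk0 C) (L.appT (L.appT (L.wk0 g) u) (L.appT (L.wk0 B) v)) := by
      intro n u v
      conv_lhs => rw [← hgE n u, L.app_exp, L.appT_compT, L.appT_compT]
    conv_lhs => rw [LamTh.psiExp, L.app_psiExpInv, L.app_pi1_pairT, L.app_pi2_pairT]
    conv_rhs => rw [← hg1, L.comp_eq, L.app_exp, L.compT_eq_abs, L.wk_compT, L.wk_wk0,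
      L.wk_wk0, L.appT_compT, L.wk_appT, L.wk_wk0, L.wk_xv]
    simp only [Fin.castSucc_zero, show Fin.last 1 = (1 : Fin 2) from rfl]
    congr 2
    exact gCB 2 (L.xv 2 0) (L.xv 2 1)
  refine ⟨goal1, ⟨⟨fun f => ⟨L.psiExp f.1, mor_psi f.1 f.2⟩,
      fun g => ⟨L.psiExpInv g.1, mor_psiInv g.1 g.2⟩,
      fun f => Subtype.ext (linv f.1 f.2),
      fun g => Subtype.ext (rinv g.1 g.2)⟩, fun f => rfl, fun g => rfl⟩, ?_⟩
  intro A' h f hA'' hh hf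
  obtain ⟨hh1, hh2⟩ := hh
  obtain ⟨hf1, hf2⟩ := hf
  have hh2p := ptw h A' h hh2
  have hfP := ptw f (L.prodObj A B) f hf2
  have fpair : ∀ (n : ℕ) (u v : L.T n),
      L.appT (L.wk0 f) (L.pairT u v)
        = L.appT (L.wk0 f) (L.pairT (L.appT (L.wk0 A) u) (L.appT (L.wk0 B) v)) := by
    intro n u v
    conv_lhs => rw [← hfP n (L.pairT u v)]
    rw [hPapp n]
  conv_lhs => rw [LamTh.psiExp, L.app_comp, L.app_pairMor, L.app_comp, L.app_comp,
    L.app_comp, L.app_comp, L.app_pi1_pairT, L.app_pi2_pairT, hh2p 2, hBB 2]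
  conv_rhs => rw [L.comp_eq, L.app_psiExp, L.wk_appT, L.wk_wk0, L.wk_xv]
  simp only [Fin.castSucc_zero, show Fin.last 1 = (1 : Fin 2) from rfl]
  congr 2
  conv_lhs => rw [fpair 2, hBB 2]
  conv_rhs => rw [fpair 2]
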